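/- For a ≤ 1/2, the marginal Dirichlet-Laplace density f_d(β) = (1/(2^{(1+a)/2} Γ(a))) |β|^{(a-1)/2} K_{1-a}(√(2|β|)) satisfies the lower bound f_d(β) ≥ √π · a · |β|^{(2a-3)/4} · exp(-√(2|β|)) / 2^{(2a+5)/4} for all β ≠ 0. -/

import Mathlib

/-- The modified Bessel function of the second kind, via the standard integral
representation. -/
noncomputable def besselK (ν x : ℝ) : ℝ :=
  (1 / 2) * (x / 2) ^ ν * ∫ t in Set.Ioi (0 : ℝ), t ^ (-ν - 1) * Real.exp (-t - x ^ 2 / (4 * t))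

/-- The marginal Dirichlet-Laplace density. -/
noncomputable def dlDensity (a β : ℝ) : ℝ :=
  (1 / ((2 : ℝ) ^ ((1 + a) / 2) * Real.Gamma a)) * |β| ^ ((a - 1) / 2) *
    besselK (1 - a) (Real.sqrt (2 * |β|))

/-
Substituting `t = (x / 2) e^s` in the integral defining `K_ν(x)` gives
`K_ν(x) = ½ ∫ cosh (ν s) e^{-x cosh s} ds` over `ℝ`, which is increasing in `|ν|`. Hence
`K_{1-a} ≥ K_{1/2}` for `a ≤ 1/2`, and `K_{1/2}(x) = √(π / (2x)) e^{-x}` follows from the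
substitution `v = sinh (s / 2)`, since `cosh s = 1 + 2 sinh² (s / 2)` turns the integral into a
Gaussian one. Together with `Γ(a) ≤ 1 / a` (convexity of `Γ` between `1` and `2`) this is the bound.
-/

open Real MeasureTheory Set

lemma Real.Gamma_le_inv {a : ℝ} (ha : 0 < a) (ha1 : a ≤ 1) : Gamma a ≤ a⁻¹ := by
  have h : Gamma (a + 1) ≤ 1 := calc
    Gamma (a + 1) = Gamma ((1 - a) * 1 + a * 2) := by ring_nf
    _ ≤ (1 - a) * Gamma 1 + a * Gamma 2 :=
      convexOn_Gamma.2 (mem_Ioi.2 one_pos) (mem_Ioi.2 two_pos) (sub_nonneg.2 ha1) ha.le (by ring)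
    _ = 1 := by rw [Gamma_one, Gamma_two]; ring
  rw [Gamma_add_one ha.ne'] at h
  rwa [← one_div, le_div_iff₀' ha]

lemma Real.cosh_eq_one_add_two_mul_sinh_half_sq (s : ℝ) : cosh s = 1 + 2 * sinh (s / 2) ^ 2 := by
  rw [← mul_div_cancel₀ s two_ne_zero, cosh_two_mul, cosh_sq']
  ring_nf

lemma Real.one_add_sq_div_two_le_cosh (s : ℝ) : 1 + s ^ 2 / 2 ≤ cosh s := by
  have hsinh : (s / 2) ^ 2 ≤ sinh (s / 2) ^ 2 := by
    rcases le_total 0 s with hs | hs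
    · have := self_le_sinh_iff.2 (by linarith : 0 ≤ s / 2)
      nlinarith
    · have := sinh_le_self_iff.2 (by linarith : s / 2 ≤ 0)
      nlinarith
  nlinarith [cosh_eq_one_add_two_mul_sinh_half_sq s]

lemma integrable_exp_mul_mul_exp_neg_mul_cosh (ν : ℝ) {x : ℝ} (hx : 0 < x) :
    Integrable fun s => exp (ν * s) * exp (-x * cosh s) := by
  -- a Gaussian majorant, from `cosh s ≥ s² / 2` by completing the square
  refine ((integrable_exp_neg_mul_sq (by positivity : 0 < x / 4)).const_mul
    (exp (ν ^ 2 / x))).mono' (by fun_prop) (ae_of_all _ fun s => ?_)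
  rw [norm_of_nonneg (by positivity), ← exp_add, ← exp_add, exp_le_exp]
  have hcosh := one_add_sq_div_two_le_cosh s
  have hsq : (x * s - 2 * ν) ^ 2 / (4 * x) = x / 4 * s ^ 2 - ν * s + ν ^ 2 / x := by
    field_simp
    ring
  nlinarith [hsq ▸ (by positivity : 0 ≤ (x * s - 2 * ν) ^ 2 / (4 * x))]

lemma besselK_eq_integral_exp_mul_exp_neg_mul_cosh (ν : ℝ) {x : ℝ} (hx : 0 < x) :
    besselK ν x = 1 / 2 * ∫ s, exp (-ν * s) * exp (-x * cosh s) := by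
  have hc : 0 < x / 2 := by positivity
  have himage : (fun s => x / 2 * exp s) '' univ = Ioi 0 := by
    ext t
    simp only [image_univ, mem_range, mem_Ioi]
    refine ⟨fun ⟨s, hs⟩ => hs ▸ by positivity, fun ht => ⟨log (t / (x / 2)), ?_⟩⟩
    rw [exp_log (div_pos ht hc)]
    field_simp
  have key := integral_image_eq_integral_abs_deriv_smul MeasurableSet.univ
    (fun s _ => ((hasDerivAt_exp s).const_mul (x / 2)).hasDerivWithinAt)
    ((mul_right_injective₀ hc.ne').comp exp_injective).injOn
    (fun t => t ^ (-ν - 1) * exp (-t - x ^ 2 / (4 * t)))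
  rw [himage, setIntegral_univ] at key
  rw [besselK, key, mul_assoc, ← integral_const_mul]
  congr 2 with s
  have hs : 0 < x / 2 * exp s := by positivity
  rw [smul_eq_mul, abs_of_pos hs, rpow_sub_one hs.ne', mul_rpow hc.le (exp_pos s).le, ← exp_mul,
    cosh_eq, exp_neg, rpow_neg hc.le]
  have := rpow_pos_of_pos hc ν
  field_simp
  ring_nf

lemma integrable_cosh_mul_mul_exp_neg_mul_cosh (ν : ℝ) {x : ℝ} (hx : 0 < x) :
    Integrable fun s => cosh (ν * s) * exp (-x * cosh s) := by
  have := ((integrable_exp_mul_mul_exp_neg_mul_cosh ν hx).add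
    (integrable_exp_mul_mul_exp_neg_mul_cosh (-ν) hx)).div_const 2
  refine this.congr (ae_of_all _ fun s => ?_)
  simp only [Pi.add_apply, cosh_eq, neg_mul]
  ring

lemma besselK_eq_integral_cosh_mul_exp_neg_mul_cosh (ν : ℝ) {x : ℝ} (hx : 0 < x) :
    besselK ν x = 1 / 2 * ∫ s, cosh (ν * s) * exp (-x * cosh s) := by
  have hsymm : ∫ s, exp (-ν * s) * exp (-x * cosh s) = ∫ s, exp (ν * s) * exp (-x * cosh s) := by
    rw [← integral_neg_eq_self]
    simp only [cosh_neg, mul_neg, neg_mul, neg_neg]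
  have hcosh : ∫ s, cosh (ν * s) * exp (-x * cosh s) = 1 / 2 *
      ((∫ s, exp (ν * s) * exp (-x * cosh s)) + ∫ s, exp (-ν * s) * exp (-x * cosh s)) := by
    rw [← integral_add (integrable_exp_mul_mul_exp_neg_mul_cosh ν hx)
      (integrable_exp_mul_mul_exp_neg_mul_cosh (-ν) hx), ← integral_const_mul]
    congr 1 with s
    rw [cosh_eq]
    ring_nf
  rw [besselK_eq_integral_exp_mul_exp_neg_mul_cosh ν hx, hcosh, ← hsymm]
  ring

lemma besselK_le_besselK {μ ν x : ℝ} (hx : 0 < x) (h : |μ| ≤ |ν|) :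
    besselK μ x ≤ besselK ν x := by
  rw [besselK_eq_integral_cosh_mul_exp_neg_mul_cosh μ hx,
    besselK_eq_integral_cosh_mul_exp_neg_mul_cosh ν hx]
  gcongr 1 / 2 * ?_
  refine integral_mono (integrable_cosh_mul_mul_exp_neg_mul_cosh μ hx)
    (integrable_cosh_mul_mul_exp_neg_mul_cosh ν hx) fun s => ?_
  gcongr
  rw [cosh_le_cosh, abs_mul, abs_mul]
  gcongr

lemma besselK_one_half {x : ℝ} (hx : 0 < x) : besselK (1 / 2) x = √(π / (2 * x)) * exp (-x) := by
  have himage : (fun s => sinh (s / 2)) '' univ = univ := by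
    rw [image_univ]
    exact (sinh_surjective.comp fun v => ⟨2 * v, by ring⟩).range_eq
  have key := integral_image_eq_integral_abs_deriv_smul (f := fun s => sinh (s / 2))
    MeasurableSet.univ
    (fun s _ => ((hasDerivAt_id' s).div_const 2).sinh.hasDerivWithinAt)
    (sinh_injective.comp fun a b (h : a / 2 = b / 2) => by linarith).injOn
    (fun v => exp (-(2 * x) * v ^ 2))
  rw [himage, setIntegral_univ, setIntegral_univ, integral_gaussian] at key
  rw [besselK_eq_integral_cosh_mul_exp_neg_mul_cosh _ hx, key, ← integral_mul_const,
    ← integral_const_mul]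
  congr 1 with s
  rw [smul_eq_mul, abs_of_pos (by positivity), cosh_eq_one_add_two_mul_sinh_half_sq s,
    one_div_mul_eq_div, mul_assoc, ← exp_add]
  ring_nf

lemma Real.sqrt_two_mul_sqrt_two_mul {b : ℝ} (hb : 0 ≤ b) :
    √(2 * √(2 * b)) = 2 ^ (3 / 4 : ℝ) * b ^ (1 / 4 : ℝ) := by
  rw [sqrt_eq_rpow, sqrt_eq_rpow, mul_rpow zero_le_two hb, ← mul_assoc,
    ← rpow_one_add' zero_le_two (by norm_num), mul_rpow (by positivity) (by positivity),
    ← rpow_mul zero_le_two, ← rpow_mul hb]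
  norm_num

/-- For `0 < a ≤ 1/2` and `β ≠ 0`,
`f_d(β) ≥ √π a |β|^{(2a-3)/4} exp(-√(2|β|)) / 2^{(2a+5)/4}`. -/
theorem dlDensity_lower_bound (a β : ℝ) (ha : 0 < a) (ha2 : a ≤ 1 / 2) (hβ : β ≠ 0) :
    Real.sqrt Real.pi * a * |β| ^ ((2 * a - 3) / 4) * Real.exp (-Real.sqrt (2 * |β|))
        / (2 : ℝ) ^ ((2 * a + 5) / 4)
      ≤ dlDensity a β := by
  have hb : 0 < |β| := abs_pos.2 hβ
  have hx : 0 < √(2 * |β|) := sqrt_pos.2 (by positivity)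
  have hK : √(π / (2 * √(2 * |β|))) * exp (-√(2 * |β|)) ≤ besselK (1 - a) √(2 * |β|) := by
    rw [← besselK_one_half hx]
    exact besselK_le_besselK hx (by rw [abs_of_pos, abs_of_pos] <;> linarith)
  have hΓ : a ≤ (Gamma a)⁻¹ :=
    (le_inv_comm₀ (Gamma_pos_of_pos ha) ha).1 (Gamma_le_inv ha (by linarith))
  calc _ = a / 2 ^ ((1 + a) / 2) * |β| ^ ((a - 1) / 2) *
        (√(π / (2 * √(2 * |β|))) * exp (-√(2 * |β|))) := by
        rw [sqrt_div' _ (by positivity : (0 : ℝ) ≤ 2 * √(2 * |β|)), sqrt_two_mul_sqrt_two_mul hb.le,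
          show (2 * a + 5) / 4 = (1 + a) / 2 + 3 / 4 by ring, rpow_add two_pos,
          show (2 * a - 3) / 4 = (a - 1) / 2 - 1 / 4 by ring, rpow_sub hb]
        field_simp
    _ ≤ (Gamma a)⁻¹ / 2 ^ ((1 + a) / 2) * |β| ^ ((a - 1) / 2) * besselK (1 - a) √(2 * |β|) := by
        gcongr
    _ = dlDensity a β := by
        rw [dlDensity]
        ring
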